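/- arXiv:2110.09494 — 3 statements merged into one kernel-verified Lean document; each statement's English description precedes it below -/
import Mathlib

section
/- Let M be a compact metric space, K ⊆ M a closed subset, and f : M → ℝ a continuous function. Then there exists a sequence of continuous functions F_n : M → ℝ (n ∈ ℕ) such that: (i) F_n(x) < F_{n+1}(x) for every x ∈ M and every n; (ii) F_n(x) < f(x) for every x ∈ K and every n; and (iii) for every continuous function H : M → ℝ with H(x) < f(x) for all x ∈ K, there exists n such that H(x) < F_n(x) for all x ∈ M. (In other words, the set of continuous functions strictly below f on K, ordered pointwise, admits a countable strictly increasing cofinal sequence.) -/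
/-!
Let `d ≥ 0` be a continuous function whose zero set is `K` (closed sets of a metric space are
zero sets). The functions `F n = f - 1/(n+1) + n * d` increase strictly in `n` and lie below `f`
on `K`. Given a continuous `H < f` on `K`, every point eventually satisfies `H < F n`: on `K`
because `1/(n+1) → 0`, off `K` because `n * d → ∞`. The sets `{H < F n}` thus form an
increasing open cover of the compact space `M`, so one of them is all of `M`.
-/

open Set

section CofinalSeq

variable {X : Type*} {f d : X → ℝ}

noncomputable def cofinalSeq (f d : X → ℝ) (n : ℕ) (x : X) : ℝ :=
  f x - 1 / (n + 1) + n * d x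

theorem continuous_cofinalSeq [TopologicalSpace X] (hf : Continuous f) (hd : Continuous d)
    (n : ℕ) : Continuous (cofinalSeq f d n) := by
  unfold cofinalSeq
  fun_prop

theorem cofinalSeq_lt_succ (hd : ∀ x, 0 ≤ d x) (n : ℕ) (x : X) :
    cofinalSeq f d n x < cofinalSeq f d (n + 1) x := by
  have h_inv : (1 : ℝ) / (n + 1 + 1) < 1 / (n + 1) :=
    one_div_lt_one_div_of_lt (by positivity) (by linarith)
  simp only [cofinalSeq, Nat.cast_succ]
  nlinarith [hd x]

theorem cofinalSeq_lt_of_eq_zero {x : X} (hx : d x = 0) (n : ℕ) : cofinalSeq f d n x < f x := by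
  simp only [cofinalSeq, hx, mul_zero, add_zero, sub_lt_self_iff]
  positivity

theorem exists_lt_cofinalSeq {g : X → ℝ} {x : X} (hd : 0 ≤ d x)
    (hgf : d x = 0 → g x < f x) : ∃ n, g x < cofinalSeq f d n x := by
  rcases hd.eq_or_lt with hx | hx
  · obtain ⟨n, hn⟩ := exists_nat_one_div_lt (sub_pos.mpr (hgf hx.symm))
    exact ⟨n, by simp only [cofinalSeq, ← hx, mul_zero]; linarith⟩
  · obtain ⟨n, hn⟩ := exists_nat_gt ((g x - f x + 1) / d x)
    refine ⟨n, ?_⟩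
    have h_inv : (1 : ℝ) / (n + 1) ≤ 1 := by
      rw [div_le_one (by positivity)]
      linarith [n.cast_nonneg (α := ℝ)]
    have h_pen : g x - f x + 1 < n * d x := (div_lt_iff₀ hx).mp hn
    simp only [cofinalSeq]
    linarith

theorem exists_forall_lt_cofinalSeq [TopologicalSpace X] [CompactSpace X] {g : X → ℝ}
    (hf : Continuous f) (hd : Continuous d) (hg : Continuous g) (hd_nonneg : ∀ x, 0 ≤ d x)
    (hgf : ∀ x, d x = 0 → g x < f x) : ∃ n, ∀ x, g x < cofinalSeq f d n x := by
  have h_mono : Monotone fun n => {x | g x < cofinalSeq f d n x} :=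
    monotone_nat_of_le_succ fun n x hx => hx.trans (cofinalSeq_lt_succ hd_nonneg n x)
  obtain ⟨n, hn⟩ := isCompact_univ.elim_directed_cover _
    (fun n => isOpen_lt hg (continuous_cofinalSeq hf hd n))
    (fun x _ => mem_iUnion.mpr (exists_lt_cofinalSeq (hd_nonneg x) (hgf x)))
    h_mono.directed_le
  exact ⟨n, fun x => hn (mem_univ x)⟩

end CofinalSeq

/-- For a compact metric space `M`, a closed subset `K ⊆ M` and a continuous
`f : M → ℝ`, the set of continuous functions strictly below `f` on `K` (ordered pointwise)
admits a countable strictly increasing cofinal sequence `F_n`. -/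
theorem stmt2 {M : Type*} [MetricSpace M] [CompactSpace M]
    (K : Set M) (hK : IsClosed K) (f : M → ℝ) (hf : Continuous f) :
    ∃ F : ℕ → M → ℝ,
      (∀ n, Continuous (F n)) ∧
      (∀ n x, F n x < F (n + 1) x) ∧
      (∀ n, ∀ x ∈ K, F n x < f x) ∧
      (∀ H : M → ℝ, Continuous H → (∀ x ∈ K, H x < f x) →
        ∃ n, ∀ x, H x < F n x) := by
  obtain ⟨d, hK_eq, hd_mem⟩ :=
    perfectlyNormalSpace_iff_forall_isClosed_preimage_zero.mp inferInstance K hK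
  have hd_nonneg : ∀ x, 0 ≤ d x := fun x => (hd_mem x).1
  have hK_iff : ∀ x, x ∈ K ↔ d x = 0 := fun x => by rw [hK_eq]; rfl
  refine ⟨cofinalSeq f d, continuous_cofinalSeq hf d.continuous, cofinalSeq_lt_succ hd_nonneg,
    fun n x hx => cofinalSeq_lt_of_eq_zero ((hK_iff x).mp hx) n, fun H hH hHf => ?_⟩
  exact exists_forall_lt_cofinalSeq hf d.continuous hH hd_nonneg
    fun x hx => hHf x ((hK_iff x).mpr hx)
end

section
/- Let f : Y → X be a continuous surjective proper map of metric spaces. Let U ⊆ Y be an open subset and suppose D ⊆ U satisfies f⁻¹(f(D)) = D. If the image f(U \ D) is open in X, then the image f(U) is open in X. -/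
/-! Since `f` is closed, the set `kernImage f U` of points whose whole fibre lies in `U` is open;
it contains `f(D)` because `D` is saturated, and it lies in `f(U)` because `f` is surjective.
Hence `f(U) = f(U \ D) ∪ kernImage f U` is a union of two open sets. -/

open Set

theorem Set.kernImage_subset_image {α β : Type*} {f : α → β} (hf : Function.Surjective f)
    (s : Set α) : kernImage f s ⊆ f '' s := fun x hx ↦
  let ⟨y, hy⟩ := hf x
  ⟨y, hx hy, hy⟩

theorem Set.image_eq_image_diff_union_kernImage {α β : Type*} {f : α → β}
    (hf : Function.Surjective f) {U D : Set α} (hDU : D ⊆ U) (hsat : f ⁻¹' (f '' D) = D) :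
    f '' U = f '' (U \ D) ∪ kernImage f U := by
  have hD : f '' D ⊆ kernImage f U := subset_kernImage_iff.2 (by rwa [hsat])
  refine (union_subset (image_mono sdiff_subset) (kernImage_subset_image hf U)).antisymm' ?_
  calc f '' U ⊆ f '' (U \ D) ∪ f '' D := by
        rw [← image_union, sdiff_union_self]
        exact image_mono subset_union_left
    _ ⊆ f '' (U \ D) ∪ kernImage f U := union_subset_union_right _ hD

theorem IsClosedMap.isOpen_image_of_isOpen_image_diff {Y X : Type*} [TopologicalSpace Y]
    [TopologicalSpace X] {f : Y → X} (hf : IsClosedMap f) (hsurj : Function.Surjective f)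
    {U D : Set Y} (hU : IsOpen U) (hDU : D ⊆ U) (hsat : f ⁻¹' (f '' D) = D)
    (hopen : IsOpen (f '' (U \ D))) : IsOpen (f '' U) := by
  rw [image_eq_image_diff_union_kernImage hsurj hDU hsat]
  exact hopen.union (isClosedMap_iff_kernImage.1 hf hU)

/-- Let `f : Y → X` be a continuous surjective proper map of metric spaces
(proper: preimage of every compact set is compact).  Let `U ⊆ Y` be open and `D ⊆ U` with
`f⁻¹(f(D)) = D`.  If `f(U \ D)` is open then `f(U)` is open. -/
theorem stmt5 {Y X : Type*} [MetricSpace Y] [MetricSpace X]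
    (f : Y → X) (hf : Continuous f) (hsurj : Function.Surjective f)
    (hproper : ∀ K : Set X, IsCompact K → IsCompact (f ⁻¹' K))
    (U D : Set Y) (hU : IsOpen U) (hDU : D ⊆ U)
    (hsat : f ⁻¹' (f '' D) = D)
    (hopen : IsOpen (f '' (U \ D))) :
    IsOpen (f '' U) :=
  have hclosed : IsClosedMap f :=
    (isProperMap_iff_isCompact_preimage.2 ⟨hf, fun K hK ↦ hproper K hK⟩).isClosedMap
  hclosed.isOpen_image_of_isOpen_image_diff hsurj hU hDU hsat hopen
end

section
/- Let a > 0 and let s₀ ≤ s₁ be real numbers. Let g : ℝ → ℝ be differentiable on [s₀, s₁] with g(s₀) < 0, and suppose that g′(s) ≥ a · (g(s))² for all s ∈ [s₀, s₁]. Then for every s ∈ (s₀, s₁], one has g(s) ≥ −1/(a·(s − s₀)). In particular, if g = log ∘ u for a positive function u, then u(s) ≥ exp(−1/(a·(s − s₀))) for all s ∈ (s₀, s₁]. -/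
/-!
If `g s ≥ 0` there is nothing to prove. Otherwise `g` is nondecreasing (as `g' ≥ a g² ≥ 0`), hence
negative on `[s₀, s]`, and there `(-1/g)' = g'/g² ≥ a`. Integrating,
`-1/g(s) ≥ -1/g(s₀) + a (s - s₀) > a (s - s₀)`, which rearranges to `g(s) ≥ -1/(a (s - s₀))`.
-/

open Set

theorem Convex.monotoneOn_of_hasDerivWithinAt_nonneg {D : Set ℝ} (hD : Convex ℝ D)
    {f f' : ℝ → ℝ} (hf : ∀ x ∈ D, HasDerivWithinAt f (f' x) D x)
    (hf'₀ : ∀ x ∈ interior D, 0 ≤ f' x) : MonotoneOn f D :=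
  _root_.monotoneOn_of_hasDerivWithinAt_nonneg hD (fun x hx => (hf x hx).continuousWithinAt)
    (fun x hx => (hf x (interior_subset hx)).mono interior_subset) hf'₀

section Riccati

variable {a s₀ s : ℝ} {g g' : ℝ → ℝ}

theorem monotoneOn_neg_inv_sub_mul
    (hderiv : ∀ t ∈ Icc s₀ s, HasDerivWithinAt g (g' t) (Icc s₀ s) t)
    (hineq : ∀ t ∈ Icc s₀ s, a * g t ^ 2 ≤ g' t) (hne : ∀ t ∈ Icc s₀ s, g t ≠ 0) :
    MonotoneOn (fun t => -(g t)⁻¹ - a * t) (Icc s₀ s) := by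
  refine (convex_Icc s₀ s).monotoneOn_of_hasDerivWithinAt_nonneg
    (f' := fun t => g' t / g t ^ 2 - a) (fun t ht => ?_) (fun t ht => ?_)
  · refine (((hderiv t ht).inv (hne t ht)).neg.sub
      ((hasDerivWithinAt_id t _).const_mul a)).congr_deriv ?_
    ring
  · have ht := interior_subset ht
    rw [sub_nonneg, le_div_iff₀ (pow_two_pos_of_ne_zero (hne t ht))]
    exact hineq t ht

theorem neg_one_div_le_of_riccati (ha : 0 < a) (hs : s₀ < s)
    (hderiv : ∀ t ∈ Icc s₀ s, HasDerivWithinAt g (g' t) (Icc s₀ s) t)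
    (hineq : ∀ t ∈ Icc s₀ s, a * g t ^ 2 ≤ g' t) :
    -(1 / (a * (s - s₀))) ≤ g s := by
  have has : 0 < a * (s - s₀) := mul_pos ha (sub_pos.2 hs)
  rcases le_or_gt 0 (g s) with hgs | hgs
  · have : 0 ≤ 1 / (a * (s - s₀)) := by positivity
    linarith
  have hmono : MonotoneOn g (Icc s₀ s) :=
    (convex_Icc s₀ s).monotoneOn_of_hasDerivWithinAt_nonneg hderiv fun t ht =>
      (by positivity : 0 ≤ a * g t ^ 2).trans (hineq t (interior_subset ht))
  have hneg : ∀ t ∈ Icc s₀ s, g t < 0 := fun t ht =>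
    (hmono ht (right_mem_Icc.2 hs.le) ht.2).trans_lt hgs
  have key : -(g s₀)⁻¹ - a * s₀ ≤ -(g s)⁻¹ - a * s :=
    monotoneOn_neg_inv_sub_mul hderiv hineq (fun t ht => (hneg t ht).ne)
      (left_mem_Icc.2 hs.le) (right_mem_Icc.2 hs.le) hs.le
  have hg₀ : 0 < -(g s₀)⁻¹ := neg_pos.2 (inv_lt_zero.2 (hneg s₀ (left_mem_Icc.2 hs.le)))
  have hinv : a * (s - s₀) ≤ (-g s)⁻¹ := by
    rw [inv_neg]
    linarith
  rw [one_div, neg_le]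
  exact (le_inv_comm₀ (neg_pos.2 hgs) has).2 hinv

end Riccati

theorem stmt10_general (a s₀ s₁ : ℝ) (ha : 0 < a)
    (g g' : ℝ → ℝ)
    (hderiv : ∀ s ∈ Set.Icc s₀ s₁, HasDerivWithinAt g (g' s) (Set.Icc s₀ s₁) s)
    (hineq : ∀ s ∈ Set.Icc s₀ s₁, a * g s ^ 2 ≤ g' s) :
    (∀ s ∈ Set.Ioc s₀ s₁, -(1 / (a * (s - s₀))) ≤ g s) ∧
      (∀ u : ℝ → ℝ, (∀ s, 0 < u s) → g = Real.log ∘ u →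
        ∀ s ∈ Set.Ioc s₀ s₁, Real.exp (-(1 / (a * (s - s₀)))) ≤ u s) := by
  have hbound : ∀ s ∈ Ioc s₀ s₁, -(1 / (a * (s - s₀))) ≤ g s := fun s ⟨hs₀, hs₁⟩ =>
    have hsub : Icc s₀ s ⊆ Icc s₀ s₁ := Icc_subset_Icc_right hs₁
    neg_one_div_le_of_riccati ha hs₀ (fun t ht => (hderiv t (hsub ht)).mono hsub)
      (fun t ht => hineq t (hsub ht))
  refine ⟨hbound, fun u hu hgu s hs => ?_⟩
  have := Real.exp_le_exp.2 (hbound s hs)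
  rwa [hgu, Function.comp_apply, Real.exp_log (hu s)] at this

/-- Let `a > 0`, `s₀ ≤ s₁`, and let `g` be differentiable on `[s₀, s₁]`
(with derivative `g'` within `[s₀, s₁]`), with `g(s₀) < 0` and `g′(s) ≥ a·g(s)²` on `[s₀, s₁]`.
Then `g(s) ≥ −1/(a·(s − s₀))` for every `s ∈ (s₀, s₁]`; in particular, if `g = log ∘ u` for a
positive function `u`, then `u(s) ≥ exp(−1/(a·(s − s₀)))` for all `s ∈ (s₀, s₁]`. -/
theorem stmt10 (a s₀ s₁ : ℝ) (ha : 0 < a) (hs : s₀ ≤ s₁)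
    (g g' : ℝ → ℝ)
    (hderiv : ∀ s ∈ Set.Icc s₀ s₁, HasDerivWithinAt g (g' s) (Set.Icc s₀ s₁) s)
    (hg0 : g s₀ < 0)
    (hineq : ∀ s ∈ Set.Icc s₀ s₁, a * g s ^ 2 ≤ g' s) :
    (∀ s ∈ Set.Ioc s₀ s₁, -(1 / (a * (s - s₀))) ≤ g s) ∧
      (∀ u : ℝ → ℝ, (∀ s, 0 < u s) → g = Real.log ∘ u →
        ∀ s ∈ Set.Ioc s₀ s₁, Real.exp (-(1 / (a * (s - s₀)))) ≤ u s) :=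
  stmt10_general a s₀ s₁ ha g g' hderiv hineq
end
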